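/- For every integer k ≥ 1, every integer n ≥ 1, and every real x, the k-fold iterated (p,q)-integral ∫_0^1 ⋯ ∫_0^1 (t_1·t_2·⋯·t_k − x)_n d_{p,q}t_1 ⋯ d_{p,q}t_k equals Σ_{m=0}^{n} (−1)^{n−m} · S_1(n,m) · Σ_{l=0}^{m} binom(m,l) · (−x)^l / [m−l+1]_{p,q}^k. -/

import Mathlib

open Finset

/-- The `(p,q)`-integer `[m]_{p,q} = (p^m - q^m)/(p - q)`. -/
noncomputable def pqInt (p q : ℝ) (m : ℕ) : ℝ := (p ^ m - q ^ m) / (p - q)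

/-- The unsigned Stirling numbers of the first kind, defined by the recurrence
`S1(n+1, m+1) = n * S1(n, m+1) + S1(n, m)`, so that
`x(x+1)⋯(x+n-1) = ∑_{m=0}^{n} S1(n,m) x^m`. -/
def stirling1 : ℕ → ℕ → ℕ
  | 0, 0 => 1
  | 0, _ + 1 => 0
  | _ + 1, 0 => 0
  | n + 1, m + 1 => n * stirling1 n (m + 1) + stirling1 n m

/-- The `(p,q)`-integral `∫_0^1 f(t) d_{p,q}t` for `0 < q < p ≤ 1`. -/
noncomputable def pqIntegral (p q : ℝ) (f : ℝ → ℝ) : ℝ :=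
  (p - q) * ∑' n : ℕ, (q ^ n / p ^ (n + 1)) * f (q ^ n / p ^ (n + 1))

/-- The `k`-fold iterated `(p,q)`-integral
`∫_0^1 ⋯ ∫_0^1 g(t₁ ⋯ t_k) d_{p,q}t₁ ⋯ d_{p,q}t_k`,
taken one variable at a time. -/
noncomputable def iterPqIntegral (p q : ℝ) : ℕ → (ℝ → ℝ) → ℝ
  | 0, g => g 1
  | k + 1, g => pqIntegral p q fun t => iterPqIntegral p q k fun s => g (t * s)

/-!
The falling factorial `(y - x)_n` expands in Stirling numbers of the first kind (via
`descPochhammer`), and each `(y - x)^m` by the binomial theorem, so the integrand is a finite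
linear combination of monomials `y^j`. At the nodes `q^n / p^(n+1)` the `(p,q)`-integrand of
`t^j` is a geometric sequence with ratio `(q/p)^(j+1)`, whence `∫ t^j d_{p,q}t = 1/[j+1]_{p,q}`;
since `(t₁ ⋯ t_k)^j` factors, the `k`-fold integral of `y^j` is `1/[j+1]_{p,q}^k`.
-/

open Polynomial

theorem stirling1_eq_stirlingFirst : stirling1 = Nat.stirlingFirst := by
  funext n m
  induction n generalizing m with
  | zero => cases m <;> rfl
  | succ n ih => cases m <;> simp [stirling1, Nat.stirlingFirst_succ_succ, ih]

theorem ascPochhammer_nat_coeff (n m : ℕ) :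
    (ascPochhammer ℕ n).coeff m = Nat.stirlingFirst n m := by
  induction n generalizing m with
  | zero => cases m <;> simp [coeff_one]
  | succ n ih =>
    cases m with
    | zero => simp [coeff_zero_eq_eval_zero]
    | succ m =>
      simp only [ascPochhammer_succ_right, mul_add, coeff_add, coeff_mul_X, coeff_mul_natCast, ih,
        Nat.cast_id, Nat.stirlingFirst_succ_succ]
      ring

theorem ascPochhammer_eval_eq_sum_stirlingFirst {S : Type*} [Semiring S] (n : ℕ) (x : S) :
    (ascPochhammer S n).eval x =
      ∑ m ∈ Finset.range (n + 1), (Nat.stirlingFirst n m : S) * x ^ m := by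
  rw [← ascPochhammer_map (Nat.castRingHom S), eval_map, eval₂_eq_sum_range,
    ascPochhammer_natDegree]
  simp [ascPochhammer_nat_coeff]

theorem descPochhammer_eval_eq_sum_stirlingFirst {R : Type*} [CommRing R] (n : ℕ) (r : R) :
    (descPochhammer R n).eval r =
      ∑ m ∈ Finset.range (n + 1), (-1) ^ (n - m) * (Nat.stirlingFirst n m : R) * r ^ m := by
  have hdesc : (descPochhammer R n).eval r = (-1) ^ n * (ascPochhammer R n).eval (-r) := by
    rw [ascPochhammer_eval_neg_eq_descPochhammer, ← mul_assoc, ← mul_pow, neg_one_mul, neg_neg,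
      one_pow, one_mul]
  rw [hdesc, ascPochhammer_eval_eq_sum_stirlingFirst, Finset.mul_sum]
  refine Finset.sum_congr rfl fun m hm => ?_
  obtain ⟨j, rfl⟩ := Nat.exists_eq_add_of_le (Finset.mem_range_succ_iff.mp hm)
  rw [neg_pow, Nat.add_sub_cancel_left, pow_add]
  have hsq : ((-1 : R) ^ m) * (-1) ^ m = 1 := by rw [← mul_pow, neg_one_mul, neg_neg, one_pow]
  linear_combination ((-1 : R) ^ j * Nat.stirlingFirst (m + j) m * r ^ m) * hsq

/-- Summability of the series defining `pqIntegral`, whose `tsum` is otherwise the junk `0`. -/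
def PqIntegrable (p q : ℝ) (f : ℝ → ℝ) : Prop :=
  Summable fun n : ℕ => (q ^ n / p ^ (n + 1)) * f (q ^ n / p ^ (n + 1))

section PqIntegral

variable {p q : ℝ}

theorem pqIntegral_const_mul (c : ℝ) (f : ℝ → ℝ) :
    pqIntegral p q (fun t => c * f t) = c * pqIntegral p q f := by
  simp only [pqIntegral, mul_left_comm _ c, tsum_mul_left]

theorem PqIntegrable.const_mul {f : ℝ → ℝ} (hf : PqIntegrable p q f) (c : ℝ) :
    PqIntegrable p q (fun t => c * f t) := by
  simpa only [PqIntegrable, mul_left_comm _ c] using hf.mul_left c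

theorem pqIntegral_finsetSum {ι : Type*} (s : Finset ι) {f : ι → ℝ → ℝ}
    (hf : ∀ i ∈ s, PqIntegrable p q (f i)) :
    pqIntegral p q (fun t => ∑ i ∈ s, f i t) = ∑ i ∈ s, pqIntegral p q (f i) := by
  simp only [pqIntegral, Finset.mul_sum]
  rw [Summable.tsum_finsetSum hf, Finset.mul_sum]

theorem pqIntegrand_pow_eq_geometric (hp : p ≠ 0) (l n : ℕ) :
    (q ^ n / p ^ (n + 1)) * (q ^ n / p ^ (n + 1)) ^ l =
      (p ^ (l + 1))⁻¹ * ((q / p) ^ (l + 1)) ^ n := by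
  rw [← pow_succ', div_pow, div_pow, div_pow, ← pow_mul, ← pow_mul, ← pow_mul]
  field_simp
  ring

variable (hpq : |q| < |p|)
include hpq

theorem abs_div_pow_lt_one (l : ℕ) : |(q / p) ^ (l + 1)| < 1 := by
  have hp : 0 < |p| := (abs_nonneg q).trans_lt hpq
  rw [abs_pow, abs_div]
  exact pow_lt_one₀ (by positivity) ((div_lt_one hp).2 hpq) l.succ_ne_zero

theorem pqIntegrable_pow (l : ℕ) : PqIntegrable p q (· ^ l) := by
  have hp : p ≠ 0 := abs_pos.mp ((abs_nonneg q).trans_lt hpq)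
  simp only [PqIntegrable, pqIntegrand_pow_eq_geometric hp]
  exact (summable_geometric_of_abs_lt_one (abs_div_pow_lt_one hpq l)).mul_left _

theorem pqIntegral_pow (l : ℕ) : pqIntegral p q (· ^ l) = (pqInt p q (l + 1))⁻¹ := by
  have hp : p ≠ 0 := abs_pos.mp ((abs_nonneg q).trans_lt hpq)
  have hgeom : 1 - (q / p) ^ (l + 1) = (p ^ (l + 1) - q ^ (l + 1)) / p ^ (l + 1) := by
    rw [div_pow, one_sub_div (pow_ne_zero _ hp)]
  simp only [pqIntegral, pqIntegrand_pow_eq_geometric hp, tsum_mul_left,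
    tsum_geometric_of_abs_lt_one (abs_div_pow_lt_one hpq l), hgeom, pqInt, inv_div]
  field_simp

theorem pqIntegral_sum_mul_pow {ι : Type*} (s : Finset ι) (c : ι → ℝ) (e : ι → ℕ) :
    pqIntegral p q (fun t => ∑ i ∈ s, c i * t ^ e i) =
      ∑ i ∈ s, c i / pqInt p q (e i + 1) := by
  rw [pqIntegral_finsetSum s fun i _ => (pqIntegrable_pow hpq (e i)).const_mul (c i)]
  refine Finset.sum_congr rfl fun i _ => ?_
  rw [pqIntegral_const_mul (c i) (· ^ e i), pqIntegral_pow hpq, div_eq_mul_inv]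

theorem iterPqIntegral_sum_mul_pow {ι : Type*} (s : Finset ι) (e : ι → ℕ) (k : ℕ)
    (c : ι → ℝ) :
    iterPqIntegral p q k (fun y => ∑ i ∈ s, c i * y ^ e i) =
      ∑ i ∈ s, c i / pqInt p q (e i + 1) ^ k := by
  induction k generalizing c with
  | zero => simp [iterPqIntegral]
  | succ k ih =>
    have hinner (t : ℝ) : iterPqIntegral p q k (fun y => ∑ i ∈ s, c i * (t * y) ^ e i) =
        ∑ i ∈ s, c i / pqInt p q (e i + 1) ^ k * t ^ e i := by
      simp only [mul_pow, ← mul_assoc, ih, div_mul_eq_mul_div]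
    simp only [iterPqIntegral, hinner, pqIntegral_sum_mul_pow hpq, div_div, pow_succ]

end PqIntegral

theorem pqPolyCauchy_first_kind_eq_sum_stirling1_general
    (p q : ℝ) (hq : 0 < q) (hqp : q < p)
    (k : ℕ) (n : ℕ) (x : ℝ) :
    iterPqIntegral p q k (fun y => ∏ i ∈ Finset.range n, (y - x - (i : ℝ))) =
      ∑ m ∈ Finset.range (n + 1),
        (-1 : ℝ) ^ (n - m) * (stirling1 n m : ℝ) *
          ∑ l ∈ Finset.range (m + 1),
            (m.choose l : ℝ) * (-x) ^ l / pqInt p q (m - l + 1) ^ (k : ℤ) := by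
  have hpq : |q| < |p| := by rwa [abs_of_pos hq, abs_of_pos (hq.trans hqp)]
  have hexpand (y : ℝ) : ∏ i ∈ Finset.range n, (y - x - (i : ℝ)) =
      ∑ ml ∈ (Finset.range (n + 1)).sigma (fun m => Finset.range (m + 1)),
        (-1) ^ (n - ml.1) * (stirling1 n ml.1 : ℝ) * ml.1.choose ml.2 * (-x) ^ ml.2 *
          y ^ (ml.1 - ml.2) := by
    rw [← descPochhammer_eval_eq_prod_range, descPochhammer_eval_eq_sum_stirlingFirst,
      Finset.sum_sigma, stirling1_eq_stirlingFirst]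
    refine Finset.sum_congr rfl fun m _ => ?_
    rw [sub_eq_neg_add, add_pow, Finset.mul_sum]
    exact Finset.sum_congr rfl fun l _ => by ring
  rw [funext hexpand, iterPqIntegral_sum_mul_pow hpq, Finset.sum_sigma]
  simp only [Finset.mul_sum, zpow_natCast]
  exact Finset.sum_congr rfl fun m _ => Finset.sum_congr rfl fun l _ => by ring

theorem pqPolyCauchy_first_kind_eq_sum_stirling1
    (p q : ℝ) (hq : 0 < q) (hqp : q < p) (hp : p ≤ 1)
    (k : ℕ) (hk : 1 ≤ k) (n : ℕ) (hn : 1 ≤ n) (x : ℝ) :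
    iterPqIntegral p q k (fun y => ∏ i ∈ Finset.range n, (y - x - (i : ℝ))) =
      ∑ m ∈ Finset.range (n + 1),
        (-1 : ℝ) ^ (n - m) * (stirling1 n m : ℝ) *
          ∑ l ∈ Finset.range (m + 1),
            (m.choose l : ℝ) * (-x) ^ l / pqInt p q (m - l + 1) ^ (k : ℤ) :=
  pqPolyCauchy_first_kind_eq_sum_stirling1_general p q hq hqp k n x
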